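/- For f ∈ D[0,1] (rcll, left-continuous at 1) the complete graph Γ̄_f := {(z,t) ∈ R^d × [0,1] : z ∈ [[f(t-), f(t)]]} is a compact subset of R^d × [0,1]. -/

import Mathlib

open Set Function Filter Topology

/-- The complete graph `Γ̄_f` of a function on `[0,1]`: pairs `(z,t)` with `t ∈ [0,1]` and
`z ∈ [[f(t-), f(t)]]`, with the convention `f(0-) := f(0)`. -/
noncomputable def completeGraph01 {d : ℕ} (f : ℝ → EuclideanSpace ℝ (Fin d)) :
    Set (EuclideanSpace ℝ (Fin d) × ℝ) :=
  {p | p.2 ∈ Icc (0:ℝ) 1 ∧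
    p.1 ∈ segment ℝ (if p.2 = 0 then f 0 else leftLim f p.2) (f p.2)}

/-!
Take an ultrafilter `𝒰` on `Γ̄_f`. Its time coordinates converge to some `T ∈ [0,1]`, and `𝒰`
lives either on the fibre `{T}`, which is a compact segment, or strictly to the right or strictly
to the left of `T`. Strictly to the right, both endpoints `f(t-)` and `f(t)` of the fibres tend
to `f(T)` (the left limits because they are limits of nearby values of `f`), so the convex fibres
squeeze the space coordinate to `f(T)`; strictly to the left they squeeze it to `f(T-)`.
-/

theorem tendsto_of_mem_segment {𝕜 E ι : Type*} [Semiring 𝕜] [PartialOrder 𝕜] [AddCommMonoid E]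
    [Module 𝕜 E] [TopologicalSpace E] [LocallyConvexSpace 𝕜 E] {l : Filter ι} {a b z : ι → E}
    {L : E} (ha : Tendsto a l (𝓝 L)) (hb : Tendsto b l (𝓝 L))
    (hz : ∀ᶠ i in l, z i ∈ segment 𝕜 (a i) (b i)) : Tendsto z l (𝓝 L) := by
  refine (LocallyConvexSpace.convex_basis (𝕜 := 𝕜) L).tendsto_right_iff.2 fun U ⟨hU, hUc⟩ => ?_
  filter_upwards [ha hU, hb hU, hz] with i hai hbi hzi
  exact hUc.segment_subset hai hbi hzi

section leftLim

variable {α β : Type*} [LinearOrder α] [TopologicalSpace α] [OrderTopology α] [DenselyOrdered α]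
  [TopologicalSpace β] {f : α → β}

theorem leftLim_mem_of_mapsTo_Ioo {a b : α} {V : Set β} (hV : IsClosed V) (hab : a < b)
    (hfV : MapsTo f (Ioo a b) V) (hb : Tendsto f (𝓝[<] b) (𝓝 (leftLim f b))) :
    leftLim f b ∈ V :=
  haveI := nhdsLT_neBot_of_exists_lt ⟨a, hab⟩
  hV.mem_of_tendsto hb (mem_of_superset (Ioo_mem_nhdsLT hab) hfV)

variable [RegularSpace β] {a : α} {L : β}

theorem tendsto_leftLim_nhdsGT [NoMaxOrder α] (hf : Tendsto f (𝓝[>] a) (𝓝 L))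
    (hlim : ∀ᶠ b in 𝓝[>] a, Tendsto f (𝓝[<] b) (𝓝 (leftLim f b))) :
    Tendsto (leftLim f) (𝓝[>] a) (𝓝 L) := by
  refine (closed_nhds_basis L).tendsto_right_iff.2 fun V ⟨hVL, hV⟩ => ?_
  obtain ⟨c, hac, hc⟩ := mem_nhdsGT_iff_exists_Ioo_subset.1 (hf hVL)
  filter_upwards [hlim, Ioo_mem_nhdsGT hac] with b hb hb'
  exact leftLim_mem_of_mapsTo_Ioo hV hb'.1 (fun x hx => hc ⟨hx.1, hx.2.trans hb'.2⟩) hb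

theorem tendsto_leftLim_nhdsLT [NoMinOrder α] (hf : Tendsto f (𝓝[<] a) (𝓝 L))
    (hlim : ∀ᶠ b in 𝓝[<] a, Tendsto f (𝓝[<] b) (𝓝 (leftLim f b))) :
    Tendsto (leftLim f) (𝓝[<] a) (𝓝 L) := by
  refine (closed_nhds_basis L).tendsto_right_iff.2 fun V ⟨hVL, hV⟩ => ?_
  obtain ⟨c, hca, hc⟩ := mem_nhdsLT_iff_exists_Ioo_subset.1 (hf hVL)
  filter_upwards [hlim, Ioo_mem_nhdsLT hca] with b hb hb'
  exact leftLim_mem_of_mapsTo_Ioo hV hb'.1 (fun x hx => hc ⟨hx.1, hx.2.trans hb'.2⟩) hb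

end leftLim

section completeGraph01

variable {d : ℕ} {f : ℝ → EuclideanSpace ℝ (Fin d)} {l : Filter (EuclideanSpace ℝ (Fin d) × ℝ)}
  {T : ℝ}

theorem exists_mem_completeGraph01_le_nhds_of_snd_gt
    (hrc : ∀ t ∈ Ico (0:ℝ) 1, ContinuousWithinAt f (Ici t) t)
    (hll : ∀ t ∈ Ioc (0:ℝ) 1, Tendsto f (𝓝[<] t) (𝓝 (leftLim f t))) [l.NeBot] (hT : 0 ≤ T)
    (hΓ : ∀ᶠ p in l, p ∈ completeGraph01 f) (hgt : ∀ᶠ p in l, T < p.2)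
    (hsnd : Tendsto Prod.snd l (𝓝 T)) :
    ∃ x ∈ completeGraph01 f, l ≤ 𝓝 x := by
  obtain ⟨p, hp, hTp⟩ := (hΓ.and hgt).exists
  have hT1 : T < 1 := hTp.trans_le hp.1.2
  have hs : Tendsto Prod.snd l (𝓝[>] T) := tendsto_nhdsWithin_iff.2 ⟨hsnd, hgt⟩
  have hf : Tendsto f (𝓝[>] T) (𝓝 (f T)) :=
    (hrc T ⟨hT, hT1⟩).mono_left (nhdsWithin_mono _ Ioi_subset_Ici_self)
  have hleft : Tendsto (leftLim f) (𝓝[>] T) (𝓝 (f T)) := by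
    refine tendsto_leftLim_nhdsGT hf ?_
    filter_upwards [Ioo_mem_nhdsGT hT1] with t ht using hll t ⟨hT.trans_lt ht.1, ht.2.le⟩
  have hfst : Tendsto Prod.fst l (𝓝 (f T)) := by
    refine tendsto_of_mem_segment (𝕜 := ℝ) (hleft.comp hs) (hf.comp hs) ?_
    filter_upwards [hΓ, hgt] with q hq hTq
    simpa only [if_neg (hT.trans_lt hTq).ne', comp_apply] using hq.2
  exact ⟨(f T, T), ⟨⟨hT, hT1.le⟩, right_mem_segment _ _ _⟩, hfst.prodMk_nhds hsnd⟩

theorem exists_mem_completeGraph01_le_nhds_of_snd_lt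
    (hll : ∀ t ∈ Ioc (0:ℝ) 1, Tendsto f (𝓝[<] t) (𝓝 (leftLim f t))) [l.NeBot] (hT : T ≤ 1)
    (hΓ : ∀ᶠ p in l, p ∈ completeGraph01 f) (hlt : ∀ᶠ p in l, p.2 < T)
    (hsnd : Tendsto Prod.snd l (𝓝 T)) :
    ∃ x ∈ completeGraph01 f, l ≤ 𝓝 x := by
  obtain ⟨p, hp, hpT⟩ := (hΓ.and hlt).exists
  have hT0 : 0 < T := hp.1.1.trans_lt hpT
  have hs : Tendsto Prod.snd l (𝓝[<] T) := tendsto_nhdsWithin_iff.2 ⟨hsnd, hlt⟩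
  have hf : Tendsto f (𝓝[<] T) (𝓝 (leftLim f T)) := hll T ⟨hT0, hT⟩
  have hleft : Tendsto (leftLim f) (𝓝[<] T) (𝓝 (leftLim f T)) := by
    refine tendsto_leftLim_nhdsLT hf ?_
    filter_upwards [Ioo_mem_nhdsLT hT0] with t ht using hll t ⟨ht.1, ht.2.le.trans hT⟩
  have hfst : Tendsto Prod.fst l (𝓝 (leftLim f T)) := by
    refine tendsto_of_mem_segment (𝕜 := ℝ) (hleft.comp hs) (hf.comp hs) ?_
    filter_upwards [hΓ, hs.eventually (Ioo_mem_nhdsLT hT0)] with q hq hq0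
    simpa only [if_neg hq0.1.ne', comp_apply] using hq.2
  refine ⟨(leftLim f T, T), ⟨⟨hT0.le, hT⟩, ?_⟩, hfst.prodMk_nhds hsnd⟩
  simpa only [if_neg hT0.ne'] using left_mem_segment ℝ (leftLim f T) (f T)

theorem isCompact_completeGraph01_inter_snd_eq (hT : T ∈ Icc (0:ℝ) 1) :
    IsCompact (completeGraph01 f ∩ {p | p.2 = T}) := by
  have hfibre : completeGraph01 f ∩ {p | p.2 = T} =
      segment ℝ (if T = 0 then f 0 else leftLim f T) (f T) ×ˢ {T} := by
    ext ⟨z, t⟩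
    constructor
    · rintro ⟨⟨-, hz⟩, rfl : t = T⟩
      exact ⟨hz, rfl⟩
    · rintro ⟨hz, rfl : t = T⟩
      exact ⟨⟨hT, hz⟩, rfl⟩
  rw [hfibre, ← convexHull_pair]
  exact ((toFinite _).isCompact_convexHull ℝ).prod isCompact_singleton

end completeGraph01

theorem isCompact_completeGraph_general {d : ℕ} (f : ℝ → EuclideanSpace ℝ (Fin d))
    (hrc : ∀ t ∈ Ico (0:ℝ) 1, ContinuousWithinAt f (Ici t) t)
    (hll : ∀ t ∈ Ioc (0:ℝ) 1, Tendsto f (𝓝[<] t) (𝓝 (leftLim f t))) :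
    IsCompact (completeGraph01 f) := by
  refine isCompact_iff_ultrafilter_le_nhds.2 fun 𝒰 h𝒰 => ?_
  have hΓ : ∀ᶠ p in (𝒰 : Filter _), p ∈ completeGraph01 f := le_principal_iff.1 h𝒰
  obtain ⟨T, hT, hsnd⟩ : ∃ T ∈ Icc (0:ℝ) 1, Tendsto Prod.snd (𝒰 : Filter _) (𝓝 T) := by
    exact isCompact_Icc.ultrafilter_le_nhds (𝒰.map Prod.snd)
      (le_principal_iff.2 (hΓ.mono fun p hp => hp.1))
  have htri : ∀ᶠ p : EuclideanSpace ℝ (Fin d) × ℝ in 𝒰, p.2 < T ∨ p.2 = T ∨ T < p.2 :=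
    .of_forall fun p => lt_trichotomy p.2 T
  rcases Ultrafilter.eventually_or.1 htri with hlt | hge
  · exact exists_mem_completeGraph01_le_nhds_of_snd_lt hll hT.2 hΓ hlt hsnd
  rcases Ultrafilter.eventually_or.1 hge with heq | hgt
  · obtain ⟨x, hx, h𝒰x⟩ := (isCompact_completeGraph01_inter_snd_eq hT).ultrafilter_le_nhds 𝒰
      (le_principal_iff.2 (hΓ.and heq))
    exact ⟨x, hx.1, h𝒰x⟩
  · exact exists_mem_completeGraph01_le_nhds_of_snd_gt hrc hll hT.1 hΓ hgt hsnd

/-- for `f ∈ D[0,1]` (right continuous with left limits on `[0,1]`,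
left-continuous at `1`), the complete graph `Γ̄_f` is a compact subset of `ℝ^d × [0,1]`. -/
theorem isCompact_completeGraph {d : ℕ} (f : ℝ → EuclideanSpace ℝ (Fin d))
    (hrc : ∀ t ∈ Ico (0:ℝ) 1, ContinuousWithinAt f (Ici t) t)
    (hll : ∀ t ∈ Ioc (0:ℝ) 1, Tendsto f (𝓝[<] t) (𝓝 (leftLim f t)))
    (hlc1 : leftLim f 1 = f 1) :
    IsCompact (completeGraph01 f) :=
  isCompact_completeGraph_general f hrc hll
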